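/- arXiv:2304.05816 — 3 statements merged into one kernel-verified Lean document; each statement's English description precedes it below -/
import Mathlib

section
/- Let m > 0, let (sₙ) be a sequence of positive reals with sₙ → ∞, and let f : (0,∞) → (0,∞) satisfy f(sₙ)/sₙ → 1/(2m). Define φ(s) = f(s) if f(s) ≤ √s and φ(s) = f(s) - √(f(s)² - s) if f(s) > √s. Then φ(sₙ) → m. -/
/-!
Since `f(sₙ)/sₙ → 1/(2m) > 0` while `1/√sₙ → 0`, eventually `f(sₙ) > √sₙ`, and rationalising
gives `φ(s) = s / (f + √(f² - s)) = 1 / (f/s + √((f/s)² - 1/s))`, which tends to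
`1 / (1/(2m) + 1/(2m)) = m`.
-/

open Filter Topology

lemma Real.sqrt_lt_of_inv_sqrt_lt_div {F s : ℝ} (hs : 0 < s) (h : (√s)⁻¹ < F / s) : √s < F := by
  rwa [lt_div_iff₀ hs, inv_mul_eq_div, Real.div_sqrt] at h

lemma Real.sub_sqrt_sq_sub_eq_inv {F s : ℝ} (hs : 0 < s) (hF : √s < F) :
    F - √(F ^ 2 - s) = (F / s + √((F / s) ^ 2 - s⁻¹))⁻¹ := by
  have hF0 : 0 < F := (Real.sqrt_nonneg s).trans_lt hF
  have hsF : s < F ^ 2 := (Real.sqrt_lt' hF0).mp hF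
  set r := √(F ^ 2 - s) with hr
  have hr0 : 0 ≤ r := Real.sqrt_nonneg _
  have hr2 : r ^ 2 = F ^ 2 - s := Real.sq_sqrt (by linarith)
  have hscaled : √((F / s) ^ 2 - s⁻¹) = r / s := by
    rw [show (F / s) ^ 2 - s⁻¹ = (F ^ 2 - s) / s ^ 2 by field_simp,
      Real.sqrt_div' _ (sq_nonneg s), Real.sqrt_sq hs.le]
  have hFr : 0 < F + r := by linarith
  rw [hscaled, ← add_div, inv_div, eq_div_iff hFr.ne']
  nlinarith [hr2]

lemma Filter.Tendsto.inv_add_sqrt_sq_sub {α : Type*} {l : Filter α} {x y : α → ℝ} {c : ℝ}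
    (hc : 0 < c) (hx : Tendsto x l (𝓝 c)) (hy : Tendsto y l (𝓝 0)) :
    Tendsto (fun n => (x n + √(x n ^ 2 - y n))⁻¹) l (𝓝 (2 * c)⁻¹) := by
  have hroot : Tendsto (fun n => √(x n ^ 2 - y n)) l (𝓝 c) := by
    simpa [Real.sqrt_sq hc.le] using ((hx.pow 2).sub hy).sqrt
  simpa [two_mul] using (hx.add hroot).inv₀ (by positivity)

theorem stmt_2_general (m : ℝ) (hm : 0 < m) (f : ℝ → ℝ)
    (s : ℕ → ℝ)
    (hs : Tendsto s atTop atTop)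
    (hratio : Tendsto (fun n => f (s n) / s n) atTop (nhds (1 / (2 * m)))) :
    Tendsto (fun n =>
      if f (s n) ≤ Real.sqrt (s n) then f (s n)
      else f (s n) - Real.sqrt ((f (s n)) ^ 2 - s n)) atTop (nhds m) := by
  have hc : 0 < 1 / (2 * m) := by positivity
  have hlim := hratio.inv_add_sqrt_sq_sub hc (tendsto_inv_atTop_zero.comp hs)
  rw [show (2 * (1 / (2 * m)))⁻¹ = m by field_simp] at hlim
  have hinv_sqrt : Tendsto (fun n => (√(s n))⁻¹) atTop (𝓝 0) :=
    tendsto_inv_atTop_zero.comp (Real.tendsto_sqrt_atTop.comp hs)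
  refine hlim.congr' ?_
  filter_upwards [hs.eventually_gt_atTop 0, hinv_sqrt.eventually_lt hratio hc] with n hpos hlt
  have hF := Real.sqrt_lt_of_inv_sqrt_lt_div hpos hlt
  rw [if_neg hF.not_ge, Real.sub_sqrt_sq_sub_eq_inv hpos hF]
  rfl

theorem stmt_2 (m : ℝ) (hm : 0 < m) (f : ℝ → ℝ)
    (hf : ∀ s > (0:ℝ), 0 < f s)
    (s : ℕ → ℝ) (hspos : ∀ n, 0 < s n)
    (hs : Tendsto s atTop atTop)
    (hratio : Tendsto (fun n => f (s n) / s n) atTop (nhds (1 / (2 * m)))) :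
    Tendsto (fun n =>
      if f (s n) ≤ Real.sqrt (s n) then f (s n)
      else f (s n) - Real.sqrt ((f (s n)) ^ 2 - s n)) atTop (nhds m) :=
  stmt_2_general m hm f s hs hratio
end

section
/- Let a > 0, θ = 1, and suppose A is a strictly positive selfadjoint operator with unbounded spectrum σ(A) ⊂ [s₀, ∞), s₀ = min σ(A). Define φ(s) = a·s if s ≤ 1/a² and φ(s) = a·s - √(a²s² - s) if s > 1/a². Then inf_{s ∈ σ(A)} φ(s) = min{a·s₀, 1/(2a)}. -/
theorem stmt_16 (a s₀ : ℝ) (ha : 0 < a) (hs₀ : 0 < s₀)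
    (σ : Set ℝ) (hclosed : IsClosed σ) (hsub : σ ⊆ Set.Ici s₀)
    (hmem : s₀ ∈ σ) (hunbdd : ¬ BddAbove σ) :
    IsGLB ((fun s : ℝ =>
      if s ≤ 1 / a ^ 2 then a * s else a * s - Real.sqrt (a ^ 2 * s ^ 2 - s)) '' σ)
      (min (a * s₀) (1 / (2 * a))) := by
  have ha2 : (0:ℝ) < a ^ 2 := by positivity
  constructor
  · rintro x ⟨s, hsσ, rfl⟩
    have hs : s₀ ≤ s := hsub hsσ
    by_cases hle : s ≤ 1 / a ^ 2
    · simp only [if_pos hle]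
      calc min (a * s₀) (1 / (2 * a)) ≤ a * s₀ := min_le_left _ _
        _ ≤ a * s := by nlinarith
    · simp only [if_neg hle]
      push_neg at hle
      have hsa : 1 / a ^ 2 < s := hle
      have h1 : (0:ℝ) < a * s - 1 / (2 * a) := by
        have h1a : 1 < a ^ 2 * s := by
          rw [div_lt_iff₀ ha2] at hsa; linarith [hsa]
        have : 1 / (2 * a) < a * s := by
          rw [div_lt_iff₀ (by linarith : (0:ℝ) < 2 * a)]
          nlinarith
        linarith
      have hsq : a ^ 2 * s ^ 2 - s ≤ (a * s - 1 / (2 * a)) ^ 2 := by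
        have : (a * s - 1 / (2 * a)) ^ 2 = a ^ 2 * s ^ 2 - s + (1 / (2 * a)) ^ 2 := by
          field_simp; ring
        rw [this]
        have : (0:ℝ) ≤ (1 / (2 * a)) ^ 2 := by positivity
        linarith
      have h2 : Real.sqrt (a ^ 2 * s ^ 2 - s) ≤ a * s - 1 / (2 * a) := by
        calc Real.sqrt (a ^ 2 * s ^ 2 - s) ≤ Real.sqrt ((a * s - 1 / (2 * a)) ^ 2) :=
              Real.sqrt_le_sqrt hsq
          _ = a * s - 1 / (2 * a) := Real.sqrt_sq h1.le
      calc min (a * s₀) (1 / (2 * a)) ≤ 1 / (2 * a) := min_le_right _ _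
        _ ≤ a * s - Real.sqrt (a ^ 2 * s ^ 2 - s) := by linarith
  · intro b hb
    rcases le_or_gt (a * s₀) (1 / (2 * a)) with hc | hc
    · have hs₀le : s₀ ≤ 1 / a ^ 2 := by
        rw [le_div_iff₀ ha2]
        rw [le_div_iff₀ (by linarith : (0:ℝ) < 2 * a)] at hc
        nlinarith
      rw [min_eq_left hc]
      have := hb (Set.mem_image_of_mem _ hmem)
      simp only [if_pos hs₀le] at this
      exact this
    · rw [min_eq_right hc.le]
      refine le_of_forall_pos_le_add ?_
      intro ε hε
      set T := 1 / (2 * a) + ε with hT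
      have hTpos : 0 < T := by rw [hT]; positivity
      have hD : (0:ℝ) < 2 * a * T - 1 := by
        rw [hT]
        have h2a : 2 * a * (1 / (2 * a)) = 1 := by field_simp
        nlinarith
      obtain ⟨s, hsσ, hsbig⟩ := (not_bddAbove_iff.mp hunbdd) (max (1 / a ^ 2) (T ^ 2 / (2 * a * T - 1)))
      have hs1 : 1 / a ^ 2 < s := lt_of_le_of_lt (le_max_left _ _) hsbig
      have hs2 : T ^ 2 / (2 * a * T - 1) < s := lt_of_le_of_lt (le_max_right _ _) hsbig
      have hsD : T ^ 2 ≤ s * (2 * a * T - 1) := by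
        rw [div_lt_iff₀ hD] at hs2; linarith
      have hb' := hb (Set.mem_image_of_mem _ hsσ)
      simp only [if_neg (not_le.mpr hs1)] at hb'
      -- show a * s - sqrt (a²s² - s) ≤ T
      have hsqrt : a * s - T ≤ Real.sqrt (a ^ 2 * s ^ 2 - s) := by
        rcases le_or_gt (a * s - T) 0 with h | h
        · exact h.trans (Real.sqrt_nonneg _)
        · rw [show a * s - T = Real.sqrt ((a * s - T) ^ 2) from (Real.sqrt_sq h.le).symm]
          apply Real.sqrt_le_sqrt
          nlinarith
      linarith
end

section
/- Let a > 0 and θ ∈ (1/2, 1). The equation s - 2·a^{(2-2θ)/(1-2θ)}·s^θ + a^{2/(1-2θ)} = 0 for s > 0 has exactly two distinct solutions, one of which equals a^{2/(1-2θ)}. -/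
/-!
Writing `B = a ^ (2 / (1 - 2θ))`, the coefficient `a ^ ((2 - 2θ) / (1 - 2θ))` is `B ^ (1 - θ)`, so
the substitution `s = B t` turns the equation into `B · (t - 2 t^θ + 1) = 0`. The profile
`t - 2 t^θ + 1` is strictly convex on `[0, ∞)`, hence has at most two zeros. One zero is `t = 1`;
there the derivative is `1 - 2θ < 0`, so the profile dips below zero to the right of `1`, and since it
is positive again at `t = 2 ^ (1 - θ)⁻¹`, the intermediate value theorem gives a second zero `t_b > 1`.
-/

open Real Set Filter Topology

section StrictConvexLevelSet

variable {𝕜 β : Type*} [Field 𝕜] [LinearOrder 𝕜] [IsStrictOrderedRing 𝕜]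
  [AddCommMonoid β] [LinearOrder β] [IsOrderedAddMonoid β] [Module 𝕜 β]
  [PosSMulStrictMono 𝕜 β]
  {s : Set 𝕜} {f : 𝕜 → β} {c : β} {x y z : 𝕜}

lemma StrictConvexOn.apply_lt_of_mem_Ioo (hf : StrictConvexOn 𝕜 s f) (hx : x ∈ s) (hz : z ∈ s)
    (hy : y ∈ Ioo x z) (hfx : f x = c) (hfz : f z = c) : f y < c := by
  have hxz : x < z := hy.1.trans hy.2
  have := hf.lt_on_openSegment hx hz hxz.ne (by rwa [openSegment_eq_Ioo hxz])
  rwa [hfx, hfz, max_self] at this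

lemma StrictConvexOn.eq_or_eq_of_apply_eq (hf : StrictConvexOn 𝕜 s f) (hx : x ∈ s) (hy : y ∈ s)
    (hz : z ∈ s) (hxy : x < y) (hfx : f x = c) (hfy : f y = c) (hfz : f z = c) :
    z = x ∨ z = y := by
  by_contra! ⟨hzx, hzy⟩
  rcases hzx.lt_or_gt with hzx | hxz
  · exact (hf.apply_lt_of_mem_Ioo hz hy ⟨hzx, hxy⟩ hfz hfy).ne hfx
  rcases hzy.lt_or_gt with hzy | hyz
  · exact (hf.apply_lt_of_mem_Ioo hx hy ⟨hxz, hzy⟩ hfx hfy).ne hfz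
  · exact (hf.apply_lt_of_mem_Ioo hx hz ⟨hxy, hyz⟩ hfx hfz).ne hfy

end StrictConvexLevelSet

lemma HasDerivAt.exists_gt_apply_lt {f : ℝ → ℝ} {f' x : ℝ} (hf : HasDerivAt f f' x)
    (hf' : f' < 0) : ∃ y > x, f y < f x := by
  obtain ⟨t, hslope, ht⟩ :=
    ((hf.tendsto_slope_zero_right.eventually (gt_mem_nhds hf')).and self_mem_nhdsWithin).exists
  have ht : 0 < t := ht
  refine ⟨x + t, lt_add_of_pos_right x ht, ?_⟩
  have : f (x + t) - f x < 0 := by simpa [smul_eq_mul, inv_mul_lt_iff₀ ht] using hslope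
  linarith

noncomputable def resonanceProfile (θ t : ℝ) : ℝ := t - 2 * t ^ θ + 1

section ResonanceProfile

variable {θ : ℝ}

lemma resonanceProfile_one : resonanceProfile θ 1 = 0 := by
  norm_num [resonanceProfile]

lemma continuous_resonanceProfile (hθ : 0 ≤ θ) : Continuous (resonanceProfile θ) := by
  unfold resonanceProfile
  have := continuous_rpow_const hθ
  fun_prop

lemma strictConvexOn_resonanceProfile (hθ₀ : 0 < θ) (hθ₁ : θ < 1) :
    StrictConvexOn ℝ (Ici 0) (resonanceProfile θ) := by
  have hconcave := (strictConcaveOn_rpow hθ₀ hθ₁).add (strictConcaveOn_rpow hθ₀ hθ₁)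
  have hconvex : ConvexOn ℝ (Ici 0) (fun t : ℝ => t + 1) :=
    (convexOn_id (convex_Ici 0)).add (convexOn_const 1 (convex_Ici 0))
  refine (hconvex.sub_strictConcaveOn hconcave).congr fun t _ => ?_
  simp only [resonanceProfile, Pi.sub_apply, Pi.add_apply]
  ring

lemma hasDerivAt_resonanceProfile_one : HasDerivAt (resonanceProfile θ) (1 - 2 * θ) 1 := by
  have hrpow : HasDerivAt (fun t : ℝ => t ^ θ) (θ * 1 ^ (θ - 1)) 1 :=
    hasDerivAt_rpow_const (Or.inl one_ne_zero)
  exact (((hasDerivAt_id 1).sub (hrpow.const_mul 2)).add_const 1).congr_deriv (by simp)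

lemma resonanceProfile_two_rpow (hθ : θ ≠ 1) : resonanceProfile θ (2 ^ (1 - θ)⁻¹) = 1 := by
  set T : ℝ := 2 ^ (1 - θ)⁻¹
  have hT : 0 < T := by positivity
  have hT₂ : T ^ (1 - θ) = 2 := rpow_inv_rpow zero_le_two (sub_ne_zero.2 hθ.symm)
  have hsplit : T = T ^ (1 - θ) * T ^ θ := by
    rw [← rpow_add hT, sub_add_cancel, rpow_one]
  unfold resonanceProfile
  rw [hT₂] at hsplit
  linarith

lemma exists_one_lt_resonanceProfile_eq_zero (hθ₀ : 1 / 2 < θ) (hθ₁ : θ < 1) :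
    ∃ tb, 1 < tb ∧ resonanceProfile θ tb = 0 := by
  obtain ⟨t₀, ht₀, hneg⟩ := hasDerivAt_resonanceProfile_one.exists_gt_apply_lt (by linarith)
  rw [resonanceProfile_one] at hneg
  set T : ℝ := 2 ^ (1 - θ)⁻¹
  have hT : 1 < T := one_lt_rpow one_lt_two (inv_pos.2 (by linarith))
  have hzero : (0 : ℝ) ∈ uIcc (resonanceProfile θ t₀) (resonanceProfile θ T) := by
    rw [resonanceProfile_two_rpow hθ₁.ne]
    exact ⟨by simp [hneg.le], by simp⟩
  obtain ⟨tb, htb, htb₀⟩ :=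
    intermediate_value_uIcc ((continuous_resonanceProfile (by linarith)).continuousOn) hzero
  exact ⟨tb, lt_of_lt_of_le (lt_min ht₀ hT) htb.1, htb₀⟩

lemma resonanceProfile_eq_zero_iff (hθ₀ : 1 / 2 < θ) (hθ₁ : θ < 1) :
    ∃ tb, 1 < tb ∧ ∀ t ≥ 0, (resonanceProfile θ t = 0 ↔ t = 1 ∨ t = tb) := by
  obtain ⟨tb, htb, htb₀⟩ := exists_one_lt_resonanceProfile_eq_zero hθ₀ hθ₁
  refine ⟨tb, htb, fun t ht => ⟨fun ht₀ => ?_, ?_⟩⟩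
  · exact (strictConvexOn_resonanceProfile (by linarith) hθ₁).eq_or_eq_of_apply_eq
      (mem_Ici.2 zero_le_one) (mem_Ici.2 (by linarith)) (mem_Ici.2 ht) htb
      resonanceProfile_one htb₀ ht₀
  · rintro (rfl | rfl)
    exacts [resonanceProfile_one, htb₀]

end ResonanceProfile

lemma sub_mul_rpow_add_eq_mul_resonanceProfile {B s θ : ℝ} (hB : 0 < B) (hs : 0 ≤ s) :
    s - 2 * B ^ (1 - θ) * s ^ θ + B = B * resonanceProfile θ (s / B) := by
  have hBθ : 0 < B ^ θ := rpow_pos_of_pos hB θ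
  rw [resonanceProfile, div_rpow hs hB.le, rpow_sub hB, rpow_one]
  field_simp

lemma rpow_two_sub_div_eq {a θ : ℝ} (ha : 0 ≤ a) (hθ : 1 - 2 * θ ≠ 0) :
    a ^ ((2 - 2 * θ) / (1 - 2 * θ)) = (a ^ ((2 : ℝ) / (1 - 2 * θ))) ^ (1 - θ) := by
  rw [← rpow_mul ha]
  congr 1
  field_simp

theorem stmt_18 (a θ : ℝ) (ha : 0 < a) (hθ : θ ∈ Set.Ioo (1/2 : ℝ) 1) :
    ∃ sb : ℝ, 0 < sb ∧ sb ≠ a ^ ((2:ℝ) / (1 - 2 * θ)) ∧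
      ∀ s > (0:ℝ),
        (s - 2 * a ^ ((2 - 2 * θ) / (1 - 2 * θ)) * s ^ θ + a ^ ((2:ℝ) / (1 - 2 * θ)) = 0 ↔
          s = a ^ ((2:ℝ) / (1 - 2 * θ)) ∨ s = sb) := by
  obtain ⟨hθ₀, hθ₁⟩ := hθ
  obtain ⟨tb, htb, hzero⟩ := resonanceProfile_eq_zero_iff hθ₀ hθ₁
  rw [rpow_two_sub_div_eq ha.le (by linarith)]
  set B := a ^ ((2 : ℝ) / (1 - 2 * θ))
  have hB : 0 < B := rpow_pos_of_pos ha _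
  refine ⟨B * tb, by positivity, fun h => htb.ne' ?_, fun s hs => ?_⟩
  · simpa [hB.ne'] using mul_right_eq_self₀.1 h
  rw [sub_mul_rpow_add_eq_mul_resonanceProfile hB hs.le, mul_eq_zero, or_iff_right hB.ne',
    hzero _ (div_nonneg hs.le hB.le), div_eq_iff hB.ne', div_eq_iff hB.ne', one_mul, mul_comm tb]
end
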